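/- Let ζ(y, x'; μ, σ) = log{(σ₀/σ) φ₁((σ₀/σ)(y − (1/σ₀)(μ−μ₀)·x'))} − log φ₁(y), where φ₁ is the standard Cauchy density, σ₀, σ > 0, and μ, μ₀, x' ∈ ℝ^q. Then there is a constant C such that sup over (μ,σ) in any fixed compact subset of ℝ^q × (0,∞) of |ζ(y, x'; μ, σ)| ≤ C(1 + log(1+|x'|))(1 + log(1+|y|)) for all y ∈ ℝ and x' ∈ ℝ^q. -/

import Mathlib

open Real MeasureTheory RealInnerProductSpace

/-- The standard Cauchy density. -/
noncomputable def phi1 (y : ℝ) : ℝ := 1 / (π * (1 + y ^ 2))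

/-- The function `ζ(y, x'; μ, σ)` appearing in the Cauchy quasi-likelihood contrast. -/
noncomputable def zetaFun {q : ℕ} (σ₀ : ℝ) (μ₀ : EuclideanSpace ℝ (Fin q))
    (y : ℝ) (x' : EuclideanSpace ℝ (Fin q)) (μ : EuclideanSpace ℝ (Fin q)) (σ : ℝ) : ℝ :=
  Real.log ((σ₀ / σ) * phi1 ((σ₀ / σ) * (y - (1 / σ₀) * (inner ℝ (μ - μ₀) x' : ℝ)))) -
    Real.log (phi1 y)

/-!
Writing `a = σ₀/σ` and `c = ⟨μ - μ₀, x'⟩/σ₀`, we have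
`ζ = log a + log (1 + y²) - log (1 + (a (y - c))²)`. The function `L t = log (1 + t²)` is
subadditive under products and, up to `log 2`, under sums, so `L (a (y - c))` and
`L y = L (a⁻¹ · a (y - c) + c)` differ by at most `log 2 + L a + L a⁻¹ + L c`: the bound does
not even depend on `y`. Finally `L c ≤ 2 log (1 + ‖μ - μ₀‖/σ₀) + 2 log (1 + ‖x'‖)`, and the
terms depending on `(μ, σ)` are continuous on the compact set, hence bounded.
-/

namespace Real

lemma log_one_add_sq_mul_le (s t : ℝ) :
    log (1 + (s * t) ^ 2) ≤ log (1 + s ^ 2) + log (1 + t ^ 2) := by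
  rw [← log_mul (by positivity) (by positivity)]
  exact log_le_log (by positivity) (by nlinarith [sq_nonneg s, sq_nonneg t])

lemma log_one_add_sq_add_le (u v : ℝ) :
    log (1 + (u + v) ^ 2) ≤ log 2 + log (1 + u ^ 2) + log (1 + v ^ 2) := by
  rw [← log_mul two_ne_zero (by positivity), ← log_mul (by positivity) (by positivity)]
  exact log_le_log (by positivity) (by nlinarith [sq_nonneg (u - v), sq_nonneg (u * v)])

lemma abs_log_one_add_sq_mul_sub_sub_le {a : ℝ} (ha : a ≠ 0) (c y : ℝ) :
    |log (1 + (a * (y - c)) ^ 2) - log (1 + y ^ 2)| ≤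
      log 2 + log (1 + a ^ 2) + log (1 + a⁻¹ ^ 2) + log (1 + c ^ 2) := by
  have hy : y = a⁻¹ * (a * (y - c)) + c := by field_simp; ring
  have h_upper : log (1 + (a * (y - c)) ^ 2) ≤
      log (1 + a ^ 2) + (log 2 + log (1 + y ^ 2) + log (1 + c ^ 2)) := by
    have := log_one_add_sq_add_le y (-c)
    rw [neg_sq, ← sub_eq_add_neg] at this
    linarith [log_one_add_sq_mul_le a (y - c)]
  have h_lower : log (1 + y ^ 2) ≤
      log 2 + (log (1 + a⁻¹ ^ 2) + log (1 + (a * (y - c)) ^ 2)) + log (1 + c ^ 2) := by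
    conv_lhs => rw [hy]
    linarith [log_one_add_sq_add_le (a⁻¹ * (a * (y - c))) c,
      log_one_add_sq_mul_le a⁻¹ (a * (y - c))]
  have : 0 ≤ log (1 + a⁻¹ ^ 2) := log_nonneg (by nlinarith [sq_nonneg a⁻¹])
  have : 0 ≤ log (1 + a ^ 2) := log_nonneg (by nlinarith [sq_nonneg a])
  rw [abs_sub_le_iff]
  constructor <;> linarith

lemma log_le_half_log_one_add_sq {a : ℝ} (ha : 0 < a) : log a ≤ log (1 + a ^ 2) / 2 := by
  have h_sq : 2 * log a = log (a ^ 2) := by rw [log_pow]; norm_num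
  rw [le_div_iff₀ two_pos, mul_comm, h_sq]
  exact log_le_log (by positivity) (by linarith)

lemma abs_log_le_log_one_add_sq_add {a : ℝ} (ha : 0 < a) :
    |log a| ≤ log (1 + a ^ 2) + log (1 + a⁻¹ ^ 2) := by
  have h_pos := log_le_half_log_one_add_sq ha
  have h_neg := log_le_half_log_one_add_sq (inv_pos.2 ha)
  rw [log_inv] at h_neg
  have : 0 ≤ log (1 + a⁻¹ ^ 2) := log_nonneg (by nlinarith [sq_nonneg a⁻¹])
  have : 0 ≤ log (1 + a ^ 2) := log_nonneg (by nlinarith [sq_nonneg a])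
  rw [abs_le]
  constructor <;> linarith

lemma log_one_add_sq_le_two_mul_log_one_add_abs (t : ℝ) :
    log (1 + t ^ 2) ≤ 2 * log (1 + |t|) := by
  have h_sq : 2 * log (1 + |t|) = log ((1 + |t|) ^ 2) := by rw [log_pow]; norm_num
  rw [h_sq]
  exact log_le_log (by positivity) (by nlinarith [abs_nonneg t, sq_abs t])

lemma log_one_add_mul_le {u v : ℝ} (hu : 0 ≤ u) (hv : 0 ≤ v) :
    log (1 + u * v) ≤ log (1 + u) + log (1 + v) := by
  rw [← log_mul (by positivity) (by positivity)]
  exact log_le_log (by positivity) (by nlinarith)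

end Real

lemma log_phi1 (z : ℝ) : Real.log (phi1 z) = -(Real.log π + Real.log (1 + z ^ 2)) := by
  rw [phi1, one_div, Real.log_inv, Real.log_mul pi_pos.ne' (by positivity)]

lemma zetaFun_eq {q : ℕ} {σ₀ σ : ℝ} (hσ₀ : σ₀ ≠ 0) (hσ : σ ≠ 0)
    (μ₀ : EuclideanSpace ℝ (Fin q)) (y : ℝ) (x' μ : EuclideanSpace ℝ (Fin q)) :
    zetaFun σ₀ μ₀ y x' μ σ = Real.log (σ₀ / σ) + (Real.log (1 + y ^ 2) -
      Real.log (1 + (σ₀ / σ * (y - 1 / σ₀ * inner ℝ (μ - μ₀) x')) ^ 2)) := by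
  have hphi1 : ∀ z, phi1 z ≠ 0 := fun z => by rw [phi1]; positivity
  rw [zetaFun, Real.log_mul (div_ne_zero hσ₀ hσ) (hphi1 _), log_phi1, log_phi1]
  ring

noncomputable def zetaParamBound {q : ℕ} (σ₀ : ℝ) (μ₀ μ : EuclideanSpace ℝ (Fin q)) (σ : ℝ) :
    ℝ :=
  Real.log 2 + 2 * (Real.log (1 + (σ₀ / σ) ^ 2) + Real.log (1 + (σ / σ₀) ^ 2)) +
    2 * Real.log (1 + ‖μ - μ₀‖ / σ₀)

lemma log_one_add_sq_inner_div_le {q : ℕ} {σ₀ : ℝ} (hσ₀ : 0 < σ₀)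
    (v x' : EuclideanSpace ℝ (Fin q)) :
    Real.log (1 + (1 / σ₀ * inner ℝ v x') ^ 2) ≤
      2 * Real.log (1 + ‖v‖ / σ₀) + 2 * Real.log (1 + ‖x'‖) := by
  have h_abs : |1 / σ₀ * inner ℝ v x'| ≤ ‖v‖ / σ₀ * ‖x'‖ :=
    calc |1 / σ₀ * inner ℝ v x'| = |inner ℝ v x'| / σ₀ := by
          rw [abs_mul, abs_of_pos (by positivity)]; ring
      _ ≤ ‖v‖ * ‖x'‖ / σ₀ := by gcongr; exact abs_real_inner_le_norm v x'
      _ = _ := by ring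
  calc Real.log (1 + (1 / σ₀ * inner ℝ v x') ^ 2)
      ≤ 2 * Real.log (1 + |1 / σ₀ * inner ℝ v x'|) :=
        Real.log_one_add_sq_le_two_mul_log_one_add_abs _
    _ ≤ 2 * Real.log (1 + ‖v‖ / σ₀ * ‖x'‖) := by gcongr
    _ ≤ 2 * (Real.log (1 + ‖v‖ / σ₀) + Real.log (1 + ‖x'‖)) := by
        gcongr; exact Real.log_one_add_mul_le (by positivity) (norm_nonneg _)
    _ = _ := by ring

lemma abs_zetaFun_le {q : ℕ} {σ₀ σ : ℝ} (hσ₀ : 0 < σ₀) (hσ : 0 < σ)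
    (μ₀ : EuclideanSpace ℝ (Fin q)) (y : ℝ) (x' μ : EuclideanSpace ℝ (Fin q)) :
    |zetaFun σ₀ μ₀ y x' μ σ| ≤ zetaParamBound σ₀ μ₀ μ σ + 2 * Real.log (1 + ‖x'‖) := by
  have h_log := Real.abs_log_le_log_one_add_sq_add (div_pos hσ₀ hσ)
  have h_diff := Real.abs_log_one_add_sq_mul_sub_sub_le (div_pos hσ₀ hσ).ne'
    (1 / σ₀ * inner ℝ (μ - μ₀) x') y
  have h_c := log_one_add_sq_inner_div_le hσ₀ (μ - μ₀) x'
  rw [inv_div] at h_log h_diff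
  rw [zetaFun_eq hσ₀.ne' hσ.ne', zetaParamBound]
  calc _ ≤ |Real.log (σ₀ / σ)| + |_| := abs_add_le _ _
    _ ≤ _ := by rw [abs_sub_comm]; linarith

lemma continuousOn_zetaParamBound {q : ℕ} {σ₀ : ℝ} (hσ₀ : 0 < σ₀)
    (μ₀ : EuclideanSpace ℝ (Fin q)) {S : Set (EuclideanSpace ℝ (Fin q) × ℝ)}
    (hSσ : ∀ p ∈ S, 0 < p.2) :
    ContinuousOn (fun p => zetaParamBound σ₀ μ₀ p.1 p.2) S := by
  unfold zetaParamBound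
  fun_prop (disch := first | (intro p hp; have := hSσ p hp; positivity) | fail)

/-- Uniformly over compact parameter sets, `|ζ|` is bounded by
`C (1 + log(1+‖x'‖)) (1 + log(1+|y|))`. -/
theorem zetaFun_bound {q : ℕ} {σ₀ : ℝ} (hσ₀ : 0 < σ₀) (μ₀ : EuclideanSpace ℝ (Fin q))
    (S : Set (EuclideanSpace ℝ (Fin q) × ℝ)) (hS : IsCompact S)
    (hSσ : ∀ p ∈ S, 0 < p.2) :
    ∃ C : ℝ, ∀ (y : ℝ) (x' : EuclideanSpace ℝ (Fin q))
      (μ : EuclideanSpace ℝ (Fin q)) (σ : ℝ), (μ, σ) ∈ S →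
        |zetaFun σ₀ μ₀ y x' μ σ| ≤
          C * (1 + Real.log (1 + ‖x'‖)) * (1 + Real.log (1 + |y|)) := by
  obtain ⟨B, hB⟩ := hS.exists_bound_of_continuousOn (continuousOn_zetaParamBound hσ₀ μ₀ hSσ)
  refine ⟨|B| + 2, fun y x' μ σ hmem => ?_⟩
  have h_param : zetaParamBound σ₀ μ₀ μ σ ≤ |B| :=
    (le_abs_self _).trans ((hB _ hmem).trans (le_abs_self B))
  have hX : 0 ≤ Real.log (1 + ‖x'‖) := Real.log_nonneg (by simp)
  have hY : 0 ≤ Real.log (1 + |y|) := Real.log_nonneg (by simp)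
  calc |zetaFun σ₀ μ₀ y x' μ σ|
      ≤ |B| + 2 * Real.log (1 + ‖x'‖) :=
        (abs_zetaFun_le hσ₀ (hSσ _ hmem) μ₀ y x' μ).trans (by linarith)
    _ ≤ (|B| + 2) * (1 + Real.log (1 + ‖x'‖)) * 1 := by nlinarith [abs_nonneg B]
    _ ≤ _ := by gcongr; linarith
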